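/- Let (A_k, B_k) be the iterates generated by the softImpute-ALS algorithm: A_{k+1} is a minimizer of Z₁ ↦ Q_A(Z₁|A_k,B_k) and B_{k+1} is a minimizer of Z₂ ↦ Q_B(Z₂|A_{k+1},B_k). Then the objective values are monotonically decreasing: F(A_k,B_k) ≥ F(A_{k+1},B_k) ≥ F(A_{k+1},B_{k+1}) for all k. -/
import Mathlib


noncomputable section

open Matrix Filter

/-- Squared Frobenius norm of a real matrix. -/
def frobSq {m n : ℕ} (M : Matrix (Fin m) (Fin n) ℝ) : ℝ := ∑ i, ∑ j, (M i j) ^ 2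

/-- `P_Ω`: keep the entries in `Ω`, zero out the rest. -/
def proj {m n : ℕ} (Ω : Finset (Fin m × Fin n)) (Y : Matrix (Fin m) (Fin n) ℝ) :
    Matrix (Fin m) (Fin n) ℝ := Matrix.of fun i j => if (i, j) ∈ Ω then Y i j else 0

/-- `P_Ω^⊥`: zero out the entries in `Ω`, keep the rest. -/
def projPerp {m n : ℕ} (Ω : Finset (Fin m × Fin n)) (Y : Matrix (Fin m) (Fin n) ℝ) :
    Matrix (Fin m) (Fin n) ℝ := Matrix.of fun i j => if (i, j) ∈ Ω then 0 else Y i j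

/-- `F(A,B) = (1/2)‖P_Ω(X − ABᵀ)‖_F² + (λ/2)(‖A‖_F² + ‖B‖_F²)`. -/
def Fobj {m n r : ℕ} (Ω : Finset (Fin m × Fin n)) (X : Matrix (Fin m) (Fin n) ℝ) (lam : ℝ)
    (A : Matrix (Fin m) (Fin r) ℝ) (B : Matrix (Fin n) (Fin r) ℝ) : ℝ :=
  (1 / 2) * frobSq (proj Ω (X - A * Bᵀ)) + (lam / 2) * (frobSq A + frobSq B)

/-- `Q_A(Z₁|A,B)`. -/
def QA {m n r : ℕ} (Ω : Finset (Fin m × Fin n)) (X : Matrix (Fin m) (Fin n) ℝ) (lam : ℝ)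
    (Z₁ : Matrix (Fin m) (Fin r) ℝ) (A : Matrix (Fin m) (Fin r) ℝ)
    (B : Matrix (Fin n) (Fin r) ℝ) : ℝ :=
  (1 / 2) * frobSq (proj Ω (X - Z₁ * Bᵀ) + projPerp Ω (A * Bᵀ - Z₁ * Bᵀ)) +
    (lam / 2) * frobSq Z₁ + (lam / 2) * frobSq B

/-- `Q_B(Z₂|A,B)`. -/
def QB {m n r : ℕ} (Ω : Finset (Fin m × Fin n)) (X : Matrix (Fin m) (Fin n) ℝ) (lam : ℝ)
    (Z₂ : Matrix (Fin n) (Fin r) ℝ) (A : Matrix (Fin m) (Fin r) ℝ)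
    (B : Matrix (Fin n) (Fin r) ℝ) : ℝ :=
  (1 / 2) * frobSq (proj Ω (X - A * Z₂ᵀ) + projPerp Ω (A * Bᵀ - A * Z₂ᵀ)) +
    (lam / 2) * frobSq A + (lam / 2) * frobSq Z₂

/-- `(A_k, B_k)` are softImpute-ALS iterates: `A_{k+1} ∈ argmin Q_A(·|A_k,B_k)` and
`B_{k+1} ∈ argmin Q_B(·|A_{k+1},B_k)`. -/
def SoftImputeALS {m n r : ℕ} (Ω : Finset (Fin m × Fin n)) (X : Matrix (Fin m) (Fin n) ℝ)
    (lam : ℝ) (A : ℕ → Matrix (Fin m) (Fin r) ℝ) (B : ℕ → Matrix (Fin n) (Fin r) ℝ) : Prop :=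
  ∀ k : ℕ,
    (∀ Z₁ : Matrix (Fin m) (Fin r) ℝ,
      QA Ω X lam (A (k + 1)) (A k) (B k) ≤ QA Ω X lam Z₁ (A k) (B k)) ∧
    (∀ Z₂ : Matrix (Fin n) (Fin r) ℝ,
      QB Ω X lam (B (k + 1)) (A (k + 1)) (B k) ≤ QB Ω X lam Z₂ (A (k + 1)) (B k))


lemma frobSq_nonneg {m n : ℕ} (M : Matrix (Fin m) (Fin n) ℝ) : 0 ≤ frobSq M := by
  unfold frobSq
  positivity

lemma frob_split {m n : ℕ} (Ω : Finset (Fin m × Fin n)) (Y Z : Matrix (Fin m) (Fin n) ℝ) :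
    frobSq (proj Ω Y + projPerp Ω Z) = frobSq (proj Ω Y) + frobSq (projPerp Ω Z) := by
  unfold frobSq proj projPerp
  rw [← Finset.sum_add_distrib]
  refine Finset.sum_congr rfl fun i _ => ?_
  rw [← Finset.sum_add_distrib]
  refine Finset.sum_congr rfl fun j _ => ?_
  simp only [Matrix.add_apply, Matrix.of_apply]
  by_cases h : (i, j) ∈ Ω <;> simp [h]

lemma QA_eq_F {m n r : ℕ} (Ω : Finset (Fin m × Fin n)) (X : Matrix (Fin m) (Fin n) ℝ)
    (lam : ℝ) (A : Matrix (Fin m) (Fin r) ℝ) (B : Matrix (Fin n) (Fin r) ℝ) :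
    QA Ω X lam A A B = Fobj Ω X lam A B := by
  unfold QA Fobj
  have h1 : A * Bᵀ - A * Bᵀ = 0 := by simp
  have h2 : projPerp Ω (0 : Matrix (Fin m) (Fin n) ℝ) = 0 := by
    unfold projPerp; ext i j; simp
  rw [h1, h2, add_zero]
  ring

lemma F_le_QA {m n r : ℕ} (Ω : Finset (Fin m × Fin n)) (X : Matrix (Fin m) (Fin n) ℝ)
    (lam : ℝ) (Z A : Matrix (Fin m) (Fin r) ℝ) (B : Matrix (Fin n) (Fin r) ℝ) :
    Fobj Ω X lam Z B ≤ QA Ω X lam Z A B := by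
  unfold QA Fobj
  rw [frob_split]
  nlinarith [frobSq_nonneg (projPerp Ω (A * Bᵀ - Z * Bᵀ))]

lemma QB_eq_F {m n r : ℕ} (Ω : Finset (Fin m × Fin n)) (X : Matrix (Fin m) (Fin n) ℝ)
    (lam : ℝ) (A : Matrix (Fin m) (Fin r) ℝ) (B : Matrix (Fin n) (Fin r) ℝ) :
    QB Ω X lam B A B = Fobj Ω X lam A B := by
  unfold QB Fobj
  have h1 : A * Bᵀ - A * Bᵀ = 0 := by simp
  have h2 : projPerp Ω (0 : Matrix (Fin m) (Fin n) ℝ) = 0 := by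
    unfold projPerp; ext i j; simp
  rw [h1, h2, add_zero]
  ring

lemma F_le_QB {m n r : ℕ} (Ω : Finset (Fin m × Fin n)) (X : Matrix (Fin m) (Fin n) ℝ)
    (lam : ℝ) (Z B : Matrix (Fin n) (Fin r) ℝ) (A : Matrix (Fin m) (Fin r) ℝ) :
    Fobj Ω X lam A Z ≤ QB Ω X lam Z A B := by
  unfold QB Fobj
  rw [frob_split]
  nlinarith [frobSq_nonneg (projPerp Ω (A * Bᵀ - A * Zᵀ))]

theorem softImputeALS_monotone {m n r : ℕ} (Ω : Finset (Fin m × Fin n))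
    (X : Matrix (Fin m) (Fin n) ℝ) (lam : ℝ)
    (A : ℕ → Matrix (Fin m) (Fin r) ℝ) (B : ℕ → Matrix (Fin n) (Fin r) ℝ)
    (hALS : SoftImputeALS Ω X lam A B) :
    ∀ k : ℕ,
      Fobj Ω X lam (A k) (B k) ≥ Fobj Ω X lam (A (k + 1)) (B k) ∧
      Fobj Ω X lam (A (k + 1)) (B k) ≥ Fobj Ω X lam (A (k + 1)) (B (k + 1)) := by
  intro k
  obtain ⟨hA, hB⟩ := hALS k
  constructor
  · calc Fobj Ω X lam (A (k + 1)) (B k) ≤ QA Ω X lam (A (k + 1)) (A k) (B k) :=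
          F_le_QA Ω X lam _ _ _
      _ ≤ QA Ω X lam (A k) (A k) (B k) := hA (A k)
      _ = Fobj Ω X lam (A k) (B k) := QA_eq_F Ω X lam _ _
  · calc Fobj Ω X lam (A (k + 1)) (B (k + 1)) ≤ QB Ω X lam (B (k + 1)) (A (k + 1)) (B k) :=
          F_le_QB Ω X lam _ _ _
      _ ≤ QB Ω X lam (B k) (A (k + 1)) (B k) := hB (B k)
      _ = Fobj Ω X lam (A (k + 1)) (B k) := QB_eq_F Ω X lam _ _

end
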